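/- arXiv:1009.2376 — 4 statements merged into one kernel-verified Lean document; each statement's English description precedes it below -/
import Mathlib

section
/- The cut metric satisfies the triangle inequality: for kernels W₁, W₂, W₃ defined on probability spaces S₁, S₂, S₃, one has δ_□(W₁,W₃) ≤ δ_□(W₁,W₂) + δ_□(W₂,W₃). -/
/-!
Given couplings `(ν; φ₁, φ₂)` of `μ₁, μ₂` and `(ν'; ψ₂, ψ₃)` of `μ₂, μ₃`, one would glue `ν` and
`ν'` along their common `S₂`-marginal, which needs conditional laws that a general measurable space
does not provide. Instead, `W₂` is replaced, up to `ε` in `L¹`, by a step kernel over a countable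
measurable partition of `S₂`, and `ν, ν'` are glued conditionally independently given the cell of
`φ₂` resp. `ψ₂`. On the glued space the step kernel seen through either factor is the same almost
surely, so the triangle inequality for the cut norm applies. What remains is that pulling a kernel
back along a measure-preserving map `π : (X, ρ) → (Y, ν)` does not increase its cut norm: the image
of `ρ` restricted to `A` has a density in `[0, 1]` with respect to `ν`, and the cut norm bounds
`∫ a(x) b(y) W(x, y)` for all `[0, 1]`-valued `a, b`, since this integral is linear in `a` and in
`b` and hence extremal at indicators.
-/

open MeasureTheory

/-- The cut norm defined with measurable sets. -/
noncomputable def cutNorm1 {S : Type} [MeasurableSpace S] (μ : Measure S)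
    (W : S → S → ℝ) : ℝ :=
  sSup {r : ℝ | ∃ A B : Set S, MeasurableSet A ∧ MeasurableSet B ∧
    r = |∫ p in A ×ˢ B, W p.1 p.2 ∂(μ.prod μ)|}

/-- The cut metric: the infimum over all couplings (pairs of measure-preserving maps
from a common probability space) of the cut norm of the difference of the pull-backs. -/
noncomputable def cutDist {S₁ S₂ : Type} [MeasurableSpace S₁] [MeasurableSpace S₂]
    (μ₁ : Measure S₁) (μ₂ : Measure S₂)
    (W₁ : S₁ → S₁ → ℝ) (W₂ : S₂ → S₂ → ℝ) : ℝ :=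
  sInf {r : ℝ | ∃ (Ω : Type) (_ : MeasurableSpace Ω) (ν : Measure Ω),
    IsProbabilityMeasure ν ∧ ∃ (φ₁ : Ω → S₁) (φ₂ : Ω → S₂),
      MeasurePreserving φ₁ ν μ₁ ∧ MeasurePreserving φ₂ ν μ₂ ∧
      r = cutNorm1 ν (fun x y => W₁ (φ₁ x) (φ₁ y) - W₂ (φ₂ x) (φ₂ y))}

open Set Function
open scoped ENNReal NNReal symmDiff

section Bilinear

variable {X Y : Type*} [MeasurableSpace X] [MeasurableSpace Y]

lemma exists_integral_mul_le_setIntegral {μ : Measure X} {G : X → ℝ} (hG : Integrable G μ)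
    {b : X → ℝ} (hb : Measurable b) (hb01 : ∀ x, b x ∈ Icc (0 : ℝ) 1) :
    ∃ B, MeasurableSet B ∧ ∫ x, b x * G x ∂μ ≤ ∫ x in B, G x ∂μ := by
  obtain ⟨G', hG', hGG'⟩ := hG.aemeasurable
  have hB : MeasurableSet {x | 0 < G' x} := measurableSet_lt measurable_const hG'
  refine ⟨_, hB, ?_⟩
  rw [← integral_indicator hB]
  refine integral_mono_ae (hG.bdd_mul hb.aestronglyMeasurable (c := 1) (.of_forall fun x => ?_))
    (hG.indicator hB) ?_
  · rw [Real.norm_of_nonneg (hb01 x).1]; exact (hb01 x).2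
  filter_upwards [hGG'] with x hx
  obtain ⟨hb0, hb1⟩ := hb01 x
  by_cases h : 0 < G' x
  · rw [indicator_of_mem (show x ∈ {x | 0 < G' x} from h)]; nlinarith
  · rw [indicator_of_notMem (show x ∉ {x | 0 < G' x} from h)]; nlinarith

lemma exists_rect_integral_mul_mul_le {μ : Measure X} {ν : Measure Y} [SFinite μ] [SFinite ν]
    {W : X × Y → ℝ} (hW : Integrable W (μ.prod ν)) {a : X → ℝ} {b : Y → ℝ}
    (ha : Measurable a) (hb : Measurable b)
    (ha01 : ∀ x, a x ∈ Icc (0 : ℝ) 1) (hb01 : ∀ y, b y ∈ Icc (0 : ℝ) 1) :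
    ∃ A B, MeasurableSet A ∧ MeasurableSet B ∧
      ∫ p, a p.1 * b p.2 * W p ∂(μ.prod ν) ≤ ∫ p in A ×ˢ B, W p ∂(μ.prod ν) := by
  have norm_le {t : ℝ} (ht : t ∈ Icc (0 : ℝ) 1) : ‖t‖ ≤ 1 := by
    rw [Real.norm_of_nonneg ht.1]; exact ht.2
  have haW : Integrable (fun p => a p.1 * W p) (μ.prod ν) :=
    hW.bdd_mul (ha.comp measurable_fst).aestronglyMeasurable
      (.of_forall fun p => norm_le (ha01 p.1))
  obtain ⟨B, hB, hBle⟩ := exists_integral_mul_le_setIntegral haW.integral_prod_right hb hb01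
  have hWB : Integrable W (μ.prod (ν.restrict B)) := by
    simpa [← Measure.prod_restrict] using hW.restrict (s := univ ×ˢ B)
  obtain ⟨A, hA, hAle⟩ := exists_integral_mul_le_setIntegral hWB.integral_prod_left ha ha01
  have hWAB : Integrable W ((μ.restrict A).prod (ν.restrict B)) := by
    simpa [← Measure.prod_restrict] using hW.restrict (s := A ×ˢ B)
  have habW : Integrable (fun p => a p.1 * b p.2 * W p) (μ.prod ν) :=
    hW.bdd_mul ((ha.comp measurable_fst).mul (hb.comp measurable_snd)).aestronglyMeasurable
      (.of_forall fun p => norm_le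
        ⟨mul_nonneg (ha01 _).1 (hb01 _).1, mul_le_one₀ (ha01 _).2 (hb01 _).1 (hb01 _).2⟩)
  have haWB : Integrable (fun p => a p.1 * W p) (μ.prod (ν.restrict B)) :=
    hWB.bdd_mul (ha.comp measurable_fst).aestronglyMeasurable
      (.of_forall fun p => norm_le (ha01 p.1))
  refine ⟨A, B, hA, hB, ?_⟩
  calc ∫ p, a p.1 * b p.2 * W p ∂(μ.prod ν)
      = ∫ y, b y * ∫ x, a x * W (x, y) ∂μ ∂ν := by
        rw [integral_prod_symm _ habW]
        congr 1 with y
        rw [← integral_const_mul]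
        congr 1 with x
        ring
    _ ≤ ∫ y in B, ∫ x, a x * W (x, y) ∂μ ∂ν := hBle
    _ = ∫ x, a x * ∫ y in B, W (x, y) ∂ν ∂μ := by
        rw [← integral_prod_symm _ haWB, integral_prod _ haWB]; simp_rw [integral_const_mul]
    _ ≤ ∫ x in A, ∫ y in B, W (x, y) ∂ν ∂μ := hAle
    _ = ∫ p in A ×ˢ B, W p ∂(μ.prod ν) := by
        rw [← Measure.prod_restrict, integral_prod _ hWAB]

end Bilinear

lemma exists_density_le_one_of_le {X : Type*} [MeasurableSpace X] {μ ν : Measure X}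
    [IsFiniteMeasure ν] (h : μ ≤ ν) :
    ∃ f : X → ℝ≥0, Measurable f ∧ (∀ x, f x ≤ 1) ∧ μ = ν.withDensity fun x => f x := by
  have : IsFiniteMeasure μ := isFiniteMeasure_of_le ν h
  refine ⟨fun x => min (μ.rnDeriv ν x).toNNReal 1, by fun_prop, fun x => min_le_right _ _, ?_⟩
  conv_lhs => rw [← Measure.withDensity_rnDeriv_eq μ ν (Measure.absolutelyContinuous_of_le h)]
  refine withDensity_congr_ae ?_
  filter_upwards [Measure.rnDeriv_le_one_of_le h] with x hx
  have hx' : (μ.rnDeriv ν x).toNNReal ≤ 1 := by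
    simpa using ENNReal.toNNReal_mono ENNReal.one_ne_top hx
  rw [min_eq_left hx', ENNReal.coe_toNNReal (ne_top_of_le_ne_top ENNReal.one_ne_top hx)]

section CutNorm

variable {S : Type} [MeasurableSpace S] {μ : Measure S} {W V : S → S → ℝ}

lemma cutNorm1_nonneg (μ : Measure S) (W : S → S → ℝ) : 0 ≤ cutNorm1 μ W :=
  Real.sSup_nonneg <| by rintro _ ⟨A, B, -, -, rfl⟩; exact abs_nonneg _

lemma abs_setIntegral_le_integral_abs (hW : Integrable (uncurry W) (μ.prod μ)) (A B : Set S) :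
    |∫ p in A ×ˢ B, W p.1 p.2 ∂(μ.prod μ)| ≤ ∫ p, |W p.1 p.2| ∂(μ.prod μ) :=
  (abs_integral_le_integral_abs).trans <|
    setIntegral_le_integral hW.abs (.of_forall fun _ => abs_nonneg _)

lemma abs_setIntegral_le_cutNorm1 (hW : Integrable (uncurry W) (μ.prod μ))
    {A B : Set S} (hA : MeasurableSet A) (hB : MeasurableSet B) :
    |∫ p in A ×ˢ B, W p.1 p.2 ∂(μ.prod μ)| ≤ cutNorm1 μ W :=
  le_csSup ⟨_, by rintro _ ⟨A, B, -, -, rfl⟩; exact abs_setIntegral_le_integral_abs hW A B⟩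
    ⟨A, B, hA, hB, rfl⟩

lemma cutNorm1_le_integral_abs (hW : Integrable (uncurry W) (μ.prod μ)) :
    cutNorm1 μ W ≤ ∫ p, |W p.1 p.2| ∂(μ.prod μ) :=
  Real.sSup_le (by rintro _ ⟨A, B, -, -, rfl⟩; exact abs_setIntegral_le_integral_abs hW A B)
    (integral_nonneg fun _ => abs_nonneg _)

lemma cutNorm1_congr_ae (h : uncurry W =ᵐ[μ.prod μ] uncurry V) :
    cutNorm1 μ W = cutNorm1 μ V := by
  unfold cutNorm1
  congr! 10 with r A B
  exact congrArg abs (integral_congr_ae (ae_restrict_of_ae h))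

lemma cutNorm1_add_le (hW : Integrable (uncurry W) (μ.prod μ))
    (hV : Integrable (uncurry V) (μ.prod μ)) :
    cutNorm1 μ (fun x y => W x y + V x y) ≤ cutNorm1 μ W + cutNorm1 μ V := by
  refine Real.sSup_le ?_ (add_nonneg (cutNorm1_nonneg μ W) (cutNorm1_nonneg μ V))
  rintro _ ⟨A, B, hA, hB, rfl⟩
  calc _ = |∫ p in A ×ˢ B, W p.1 p.2 ∂(μ.prod μ) + ∫ p in A ×ˢ B, V p.1 p.2 ∂(μ.prod μ)| :=
        congrArg abs (integral_add hW.restrict hV.restrict)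
    _ ≤ _ := (abs_add_le _ _).trans <|
        add_le_add (abs_setIntegral_le_cutNorm1 hW hA hB) (abs_setIntegral_le_cutNorm1 hV hA hB)

lemma cutNorm1_sub_comm (μ : Measure S) (W V : S → S → ℝ) :
    cutNorm1 μ (fun x y => W x y - V x y) = cutNorm1 μ (fun x y => V x y - W x y) := by
  unfold cutNorm1
  congr! 10 with r A B
  rw [← abs_neg, ← integral_neg]
  simp only [neg_sub]

lemma abs_integral_mul_mul_le_cutNorm1 [SFinite μ] (hW : Integrable (uncurry W) (μ.prod μ))
    {a b : S → ℝ} (ha : Measurable a) (hb : Measurable b)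
    (ha01 : ∀ x, a x ∈ Icc (0 : ℝ) 1) (hb01 : ∀ y, b y ∈ Icc (0 : ℝ) 1) :
    |∫ p, a p.1 * b p.2 * W p.1 p.2 ∂(μ.prod μ)| ≤ cutNorm1 μ W := by
  rw [abs_le']
  constructor
  · obtain ⟨A, B, hA, hB, h⟩ := exists_rect_integral_mul_mul_le hW ha hb ha01 hb01
    exact h.trans ((le_abs_self _).trans (abs_setIntegral_le_cutNorm1 hW hA hB))
  · obtain ⟨A, B, hA, hB, h⟩ := exists_rect_integral_mul_mul_le hW.neg ha hb ha01 hb01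
    calc -∫ p, a p.1 * b p.2 * W p.1 p.2 ∂(μ.prod μ)
        = ∫ p, a p.1 * b p.2 * (-uncurry W) p ∂(μ.prod μ) := by
          rw [← integral_neg]; congr 1 with p; show _ = _ * -W p.1 p.2; ring
      _ ≤ -∫ p in A ×ˢ B, W p.1 p.2 ∂(μ.prod μ) := h.trans_eq (integral_neg _)
      _ ≤ cutNorm1 μ W := (neg_le_abs _).trans (abs_setIntegral_le_cutNorm1 hW hA hB)

lemma cutNorm1_comp_le {X Y : Type} [MeasurableSpace X] [MeasurableSpace Y]
    {ρ : Measure X} {ν : Measure Y} [IsFiniteMeasure ρ] {π : X → Y}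
    (hπ : MeasurePreserving π ρ ν) {g : Y → Y → ℝ} (hg : Integrable (uncurry g) (ν.prod ν)) :
    cutNorm1 ρ (fun x y => g (π x) (π y)) ≤ cutNorm1 ν g := by
  have : IsFiniteMeasure ν := hπ.map_eq ▸ inferInstance
  refine Real.sSup_le ?_ (cutNorm1_nonneg _ _)
  rintro _ ⟨A, B, hA, hB, rfl⟩
  have hle (C : Set X) : (ρ.restrict C).map π ≤ ν :=
    hπ.map_eq ▸ Measure.map_mono Measure.restrict_le_self hπ.measurable
  obtain ⟨a, ha, ha1, hA'⟩ := exists_density_le_one_of_le (hle A)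
  obtain ⟨b, hb, hb1, hB'⟩ := exists_density_le_one_of_le (hle B)
  have hmap : ((ρ.prod ρ).restrict (A ×ˢ B)).map (Prod.map π π)
      = (ν.prod ν).withDensity fun q => ((a q.1 * b q.2 : ℝ≥0) : ℝ≥0∞) := by
    rw [← Measure.prod_restrict, ← Measure.map_prod_map _ _ hπ.measurable hπ.measurable, hA',
      hB', prod_withDensity (by fun_prop) (by fun_prop)]
    simp [ENNReal.coe_mul]
  have hint := integral_map (μ := (ρ.prod ρ).restrict (A ×ˢ B))
    (hπ.measurable.prodMap hπ.measurable).aemeasurable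
    (hmap ▸ hg.1.mono_ac (withDensity_absolutelyContinuous _ _))
  rw [hmap, integral_withDensity_eq_integral_smul (by fun_prop)] at hint
  calc |∫ p in A ×ˢ B, g (π p.1) (π p.2) ∂(ρ.prod ρ)|
      = |∫ p in A ×ˢ B, uncurry g (Prod.map π π p) ∂(ρ.prod ρ)| := rfl
    _ = |∫ q, (a q.1 : ℝ) * b q.2 * g q.1 q.2 ∂(ν.prod ν)| := by
        rw [← hint]; simp only [NNReal.smul_def, NNReal.coe_mul, smul_eq_mul]; rfl
    _ ≤ cutNorm1 ν g :=
        abs_integral_mul_mul_le_cutNorm1 hg (by fun_prop) (by fun_prop)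
          (fun y => ⟨(a y).2, by exact_mod_cast ha1 y⟩)
          (fun y => ⟨(b y).2, by exact_mod_cast hb1 y⟩)

end CutNorm

section StepKernel

variable {S : Type*} [MeasurableSpace S]

def IsStepKernel (f : S × S → ℝ) : Prop :=
  ∃ (c : S → ℕ) (w : ℕ → ℕ → ℝ), Measurable c ∧ f = fun p => w (c p.1) (c p.2)

lemma isStepKernel_of_measurable₂ {c₁ c₂ : S → ℕ} (hc₁ : Measurable c₁) (hc₂ : Measurable c₂)
    (w : ℕ → ℕ → ℝ) : IsStepKernel fun p => w (c₁ p.1) (c₂ p.2) :=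
  ⟨fun x => Nat.pair (c₁ x) (c₂ x), fun i j => w i.unpair.1 j.unpair.2,
    (measurable_of_countable (uncurry Nat.pair)).comp (hc₁.prodMk hc₂), by simp⟩

namespace IsStepKernel

variable {f g : S × S → ℝ}

lemma measurable (hf : IsStepKernel f) : Measurable f := by
  obtain ⟨c, w, hc, rfl⟩ := hf
  exact (measurable_of_countable (uncurry w)).comp (hc.prodMap hc)

lemma map (φ : ℝ → ℝ) (hf : IsStepKernel f) : IsStepKernel fun p => φ (f p) := by
  obtain ⟨c, w, hc, rfl⟩ := hf
  exact ⟨c, fun i j => φ (w i j), hc, rfl⟩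

lemma map₂ (op : ℝ → ℝ → ℝ) (hf : IsStepKernel f) (hg : IsStepKernel g) :
    IsStepKernel fun p => op (f p) (g p) := by
  obtain ⟨c₁, w₁, hc₁, rfl⟩ := hf
  obtain ⟨c₂, w₂, hc₂, rfl⟩ := hg
  refine ⟨fun x => Nat.pair (c₁ x) (c₂ x),
    fun i j => op (w₁ i.unpair.1 j.unpair.1) (w₂ i.unpair.2 j.unpair.2),
    (measurable_of_countable (uncurry Nat.pair)).comp (hc₁.prodMk hc₂), by simp⟩

end IsStepKernel

lemma isStepKernel_indicator_prod {A B : Set S} (hA : MeasurableSet A) (hB : MeasurableSet B) :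
    IsStepKernel ((A ×ˢ B).indicator fun _ => (1 : ℝ)) := by
  convert isStepKernel_of_measurable₂ (c₁ := A.indicator fun _ => 1) (c₂ := B.indicator fun _ => 1)
    (measurable_const.indicator hA) (measurable_const.indicator hB) fun i j => (i * j : ℝ) with p
  by_cases h₁ : p.1 ∈ A <;> by_cases h₂ : p.2 ∈ B <;> simp [indicator, h₁, h₂]

lemma isStepKernel_indicator_of_mem_generateSetAlgebra {U : Set (S × S)}
    (hU : U ∈ generateSetAlgebra
      (image2 (· ×ˢ ·) {s : Set S | MeasurableSet s} {t : Set S | MeasurableSet t})) :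
    IsStepKernel (U.indicator fun _ => (1 : ℝ)) := by
  induction hU with
  | base s hs =>
    obtain ⟨A, hA, B, hB, rfl⟩ := hs
    exact isStepKernel_indicator_prod hA hB
  | empty => exact ⟨0, fun _ _ => 0, measurable_const, by simp⟩
  | compl s _ ih =>
    convert ih.map (1 - ·) with p
    by_cases h : p ∈ s <;> simp [indicator, h]
  | union s t _ _ ihs iht =>
    convert ihs.map₂ max iht with p
    by_cases hs : p ∈ s <;> by_cases ht : p ∈ t <;> simp [indicator, hs, ht]

-- Finite unions of measurable rectangles are dense in measure in the product σ-algebra.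
lemma exists_isStepKernel_eLpNorm_sub_indicator_le (μ : Measure S) [IsFiniteMeasure μ]
    (c : ℝ) {s : Set (S × S)} (hs : MeasurableSet s) {δ : ℝ≥0∞} (hδ : δ ≠ 0) :
    ∃ g, eLpNorm (g - s.indicator fun _ => c) 1 (μ.prod μ) ≤ δ ∧ IsStepKernel g := by
  have hdense := Measure.MeasureDense.of_generateFrom_isSetAlgebra_finite (μ.prod μ)
    isSetAlgebra_generateSetAlgebra (by rw [generateFrom_generateSetAlgebra_eq, generateFrom_prod])
  obtain ⟨η, hη, hηc⟩ := ENNReal.exists_nnreal_pos_mul_lt enorm_ne_top hδ (a := ‖c‖ₑ)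
  obtain ⟨U, hU, hsU⟩ := hdense.approx s hs (measure_ne_top _ _) η hη
  refine ⟨U.indicator fun _ => c, ?_, ?_⟩
  · rw [eLpNorm_indicator_sub_indicator, eLpNorm_indicator_const
      ((hdense.measurable U hU).symmDiff hs) one_ne_zero ENNReal.one_ne_top]
    calc ‖c‖ₑ * (μ.prod μ) (U ∆ s) ^ (1 / (1 : ℝ≥0∞).toReal) ≤ ‖c‖ₑ * η := by
          rw [symmDiff_comm, ENNReal.toReal_one, div_one, ENNReal.rpow_one]
          gcongr
          simpa using hsU.le
      _ ≤ δ := by rw [mul_comm]; exact hηc.le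
  · convert (isStepKernel_indicator_of_mem_generateSetAlgebra hU).map (c * ·) with p
    by_cases h : p ∈ U <;> simp [indicator, h]

lemma exists_isStepKernel_integral_abs_sub_le {μ : Measure S} [IsFiniteMeasure μ]
    {f : S × S → ℝ} (hf : Integrable f (μ.prod μ)) {ε : ℝ} (hε : 0 < ε) :
    ∃ g, IsStepKernel g ∧ Integrable g (μ.prod μ) ∧ ∫ p, |f p - g p| ∂(μ.prod μ) ≤ ε := by
  obtain ⟨g, hfg, hg⟩ := (memLp_one_iff_integrable.2 hf).induction_dense ENNReal.one_ne_top
    IsStepKernel (fun c _ hs _ _ hδ => exists_isStepKernel_eLpNorm_sub_indicator_le μ c hs hδ)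
    (fun _ _ hf hg => hf.map₂ (· + ·) hg)
    (fun _ hf => hf.measurable.aestronglyMeasurable) (ENNReal.ofReal_pos.2 hε).ne'
  have hfg' : Integrable (f - g) (μ.prod μ) :=
    memLp_one_iff_integrable.1 ⟨hf.1.sub hg.measurable.aestronglyMeasurable,
      hfg.trans_lt ENNReal.ofReal_lt_top⟩
  refine ⟨g, hg, by simpa using hf.sub hfg', ?_⟩
  calc ∫ p, |f p - g p| ∂(μ.prod μ) = ∫ p, ‖(f - g) p‖ ∂(μ.prod μ) := rfl
    _ = (eLpNorm (f - g) 1 (μ.prod μ)).toReal := by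
      rw [integral_norm_eq_lintegral_enorm hfg'.1, eLpNorm_one_eq_lintegral_enorm]
    _ ≤ ε := ENNReal.toReal_le_of_le_ofReal hε.le hfg

end StepKernel

namespace MeasureTheory.Measure

lemma inv_smul_smul_restrict {X : Type*} [MeasurableSpace X] (μ : Measure X) [IsFiniteMeasure μ]
    (s : Set X) : (μ s)⁻¹ • μ s • μ.restrict s = μ.restrict s := by
  by_cases h : μ s = 0
  · simp [restrict_eq_zero.2 h]
  · rw [smul_smul, ENNReal.inv_mul_cancel h (measure_ne_top _ _), one_smul]

lemma sum_restrict_fiber {X F : Type*} [MeasurableSpace X] [MeasurableSpace F] [Countable F]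
    [MeasurableSingletonClass F] (μ : Measure X) {e : X → F} (he : Measurable e) :
    sum (fun i => μ.restrict (e ⁻¹' {i})) = μ := by
  rw [← restrict_iUnion (pairwise_disjoint_fiber e) fun i => he (measurableSet_singleton i),
    ← preimage_iUnion, iUnion_of_singleton, preimage_univ, restrict_univ]

end MeasureTheory.Measure

section RelativeProduct

variable {Ω Ω' F : Type*} [MeasurableSpace Ω] [MeasurableSpace Ω'] [MeasurableSpace F]

-- The coupling of `ν` and `ν'` that makes `e = e'` and is conditionally independent given this
-- common value. Cells with `ν (e ⁻¹' {i}) = 0` contribute nothing although `0⁻¹ = ∞`.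
noncomputable def relativeProduct (ν : Measure Ω) (ν' : Measure Ω') (e : Ω → F) (e' : Ω' → F) :
    Measure (Ω × Ω') :=
  Measure.sum fun i => (ν (e ⁻¹' {i}))⁻¹ • (ν.restrict (e ⁻¹' {i})).prod (ν'.restrict (e' ⁻¹' {i}))

variable [MeasurableSingletonClass F] {ν : Measure Ω} {ν' : Measure Ω'} {e : Ω → F} {e' : Ω' → F}

lemma measure_fiber_eq_of_map_eq (he : Measurable e) (he' : Measurable e')
    (hlaw : ν.map e = ν'.map e') (i : F) : ν (e ⁻¹' {i}) = ν' (e' ⁻¹' {i}) := by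
  rw [← Measure.map_apply he (measurableSet_singleton i), hlaw,
    Measure.map_apply he' (measurableSet_singleton i)]

variable [Countable F]

lemma ae_relativeProduct_eq [SFinite ν] [SFinite ν'] (he : Measurable e) (he' : Measurable e') :
    ∀ᵐ x ∂(relativeProduct ν ν' e e'), e x.1 = e' x.2 := by
  rw [relativeProduct, Measure.ae_sum_iff]
  intro i
  refine Measure.ae_smul_measure ?_ _
  rw [Measure.prod_restrict]
  filter_upwards [ae_restrict_mem ((he (measurableSet_singleton i)).prod
    (he' (measurableSet_singleton i)))] with x hx
  exact hx.1.trans hx.2.symm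

lemma measurePreserving_fst_relativeProduct [IsFiniteMeasure ν] [SFinite ν'] (he : Measurable e)
    (he' : Measurable e') (hlaw : ν.map e = ν'.map e') :
    MeasurePreserving Prod.fst (relativeProduct ν ν' e e') ν := by
  refine ⟨measurable_fst, ?_⟩
  rw [relativeProduct, Measure.map_sum measurable_fst.aemeasurable]
  conv_rhs => rw [← Measure.sum_restrict_fiber ν he]
  congr 1 with i : 1
  rw [Measure.map_smul, Measure.map_fst_prod, Measure.restrict_apply_univ,
    ← measure_fiber_eq_of_map_eq he he' hlaw, Measure.inv_smul_smul_restrict]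

lemma measurePreserving_snd_relativeProduct [SFinite ν] [IsFiniteMeasure ν'] (he : Measurable e)
    (he' : Measurable e') (hlaw : ν.map e = ν'.map e') :
    MeasurePreserving Prod.snd (relativeProduct ν ν' e e') ν' := by
  refine ⟨measurable_snd, ?_⟩
  rw [relativeProduct, Measure.map_sum measurable_snd.aemeasurable]
  conv_rhs => rw [← Measure.sum_restrict_fiber ν' he']
  congr 1 with i : 1
  rw [Measure.map_smul, Measure.map_snd_prod, Measure.restrict_apply_univ,
    measure_fiber_eq_of_map_eq he he' hlaw, Measure.inv_smul_smul_restrict]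

end RelativeProduct

section Coupling

variable {S Ω : Type} [MeasurableSpace S] [MeasurableSpace Ω] {μ : Measure S} {ν : Measure Ω}
  [SFinite ν] {φ : Ω → S}

lemma integrable_uncurry_comp (hφ : MeasurePreserving φ ν μ) {W : S → S → ℝ}
    (hW : Integrable (uncurry W) (μ.prod μ)) :
    Integrable (uncurry fun x y => W (φ x) (φ y)) (ν.prod ν) :=
  (hφ.prod hφ).integrable_comp_of_integrable hW

lemma cutNorm1_sub_comp_le_add (hφ : MeasurePreserving φ ν μ) {K : Ω → Ω → ℝ} {W U : S → S → ℝ}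
    (hK : Integrable (uncurry K) (ν.prod ν)) (hW : Integrable (uncurry W) (μ.prod μ))
    (hU : Integrable (uncurry U) (μ.prod μ)) :
    cutNorm1 ν (fun x y => K x y - U (φ x) (φ y))
      ≤ cutNorm1 ν (fun x y => K x y - W (φ x) (φ y))
        + ∫ p, |W p.1 p.2 - U p.1 p.2| ∂(μ.prod μ) := by
  have hWφ := integrable_uncurry_comp hφ hW
  have hUφ := integrable_uncurry_comp hφ hU
  calc cutNorm1 ν (fun x y => K x y - U (φ x) (φ y))
      = cutNorm1 ν (fun x y => (K x y - W (φ x) (φ y)) + (W (φ x) (φ y) - U (φ x) (φ y))) := by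
        congr with x y; ring
    _ ≤ cutNorm1 ν (fun x y => K x y - W (φ x) (φ y))
          + cutNorm1 ν (fun x y => W (φ x) (φ y) - U (φ x) (φ y)) :=
        cutNorm1_add_le (hK.sub hWφ) (hWφ.sub hUφ)
    _ ≤ cutNorm1 ν (fun x y => K x y - W (φ x) (φ y))
          + ∫ p, |W (φ p.1) (φ p.2) - U (φ p.1) (φ p.2)| ∂(ν.prod ν) :=
        add_le_add_right (cutNorm1_le_integral_abs (hWφ.sub hUφ)) _
    _ = _ := by
        have hφφ := hφ.prod hφ
        rw [← hφφ.map_eq, integral_map hφφ.measurable.aemeasurable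
          (hφφ.map_eq ▸ (hW.sub hU).1.norm)]
        rfl

end Coupling

section Gluing

variable {S₁ S₂ S₃ Ω Ω' : Type} [MeasurableSpace S₁] [MeasurableSpace S₂] [MeasurableSpace S₃]
  [MeasurableSpace Ω] [MeasurableSpace Ω'] {μ₁ : Measure S₁} {μ₂ : Measure S₂} {μ₃ : Measure S₃}
  {W₁ : S₁ → S₁ → ℝ} {W₂ : S₂ → S₂ → ℝ} {W₃ : S₃ → S₃ → ℝ}

lemma exists_glued_coupling_cutNorm1_le (hW₁ : Integrable (uncurry W₁) (μ₁.prod μ₁))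
    (hW₂ : Integrable (uncurry W₂) (μ₂.prod μ₂)) (hW₃ : Integrable (uncurry W₃) (μ₃.prod μ₃))
    {ν : Measure Ω} {ν' : Measure Ω'} [IsProbabilityMeasure ν] [IsProbabilityMeasure ν']
    {φ₁ : Ω → S₁} {φ₂ : Ω → S₂} {ψ₂ : Ω' → S₂} {ψ₃ : Ω' → S₃}
    (hφ₁ : MeasurePreserving φ₁ ν μ₁) (hφ₂ : MeasurePreserving φ₂ ν μ₂)
    (hψ₂ : MeasurePreserving ψ₂ ν' μ₂) (hψ₃ : MeasurePreserving ψ₃ ν' μ₃) {ε : ℝ} (hε : 0 < ε) :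
    ∃ ρ : Measure (Ω × Ω'), IsProbabilityMeasure ρ ∧ MeasurePreserving Prod.fst ρ ν ∧
      MeasurePreserving Prod.snd ρ ν' ∧
      cutNorm1 ρ (fun x y => W₁ (φ₁ x.1) (φ₁ y.1) - W₃ (ψ₃ x.2) (ψ₃ y.2))
        ≤ cutNorm1 ν (fun x y => W₁ (φ₁ x) (φ₁ y) - W₂ (φ₂ x) (φ₂ y))
          + cutNorm1 ν' (fun x y => W₂ (ψ₂ x) (ψ₂ y) - W₃ (ψ₃ x) (ψ₃ y)) + ε := by
  have : IsFiniteMeasure μ₂ := hφ₂.map_eq ▸ inferInstance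
  obtain ⟨_, ⟨c, w, hc, rfl⟩, hU, hW₂U⟩ := exists_isStepKernel_integral_abs_sub_le hW₂ (half_pos hε)
  replace hU : Integrable (uncurry fun a b => w (c a) (c b)) (μ₂.prod μ₂) := hU
  have he : Measurable (c ∘ φ₂) := hc.comp hφ₂.measurable
  have he' : Measurable (c ∘ ψ₂) := hc.comp hψ₂.measurable
  have hlaw : ν.map (c ∘ φ₂) = ν'.map (c ∘ ψ₂) := by
    rw [← Measure.map_map hc hφ₂.measurable, hφ₂.map_eq, ← Measure.map_map hc hψ₂.measurable,
      hψ₂.map_eq]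
  have hfst := measurePreserving_fst_relativeProduct he he' hlaw
  have hsnd := measurePreserving_snd_relativeProduct he he' hlaw
  set ρ := relativeProduct ν ν' (c ∘ φ₂) (c ∘ ψ₂)
  have : IsProbabilityMeasure ρ :=
    (Measure.isProbabilityMeasure_map_iff hfst.measurable.aemeasurable).1
      (hfst.map_eq ▸ inferInstance)
  refine ⟨ρ, this, hfst, hsnd, ?_⟩
  set K : Ω → Ω → ℝ := fun x y => W₁ (φ₁ x) (φ₁ y) - w (c (φ₂ x)) (c (φ₂ y))
  set K' : Ω' → Ω' → ℝ := fun x y => w (c (ψ₂ x)) (c (ψ₂ y)) - W₃ (ψ₃ x) (ψ₃ y)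
  have hK : Integrable (uncurry K) (ν.prod ν) :=
    (integrable_uncurry_comp hφ₁ hW₁).sub (integrable_uncurry_comp hφ₂ hU)
  have hK' : Integrable (uncurry K') (ν'.prod ν') :=
    (integrable_uncurry_comp hψ₂ hU).sub (integrable_uncurry_comp hψ₃ hW₃)
  have hglue : uncurry (fun x y : Ω × Ω' => W₁ (φ₁ x.1) (φ₁ y.1) - W₃ (ψ₃ x.2) (ψ₃ y.2))
      =ᵐ[ρ.prod ρ] uncurry fun x y => K x.1 y.1 + K' x.2 y.2 := by
    have h := ae_relativeProduct_eq (ν := ν) (ν' := ν') he he'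
    filter_upwards [Measure.quasiMeasurePreserving_fst.ae h,
      Measure.quasiMeasurePreserving_snd.ae h] with P h₁ h₂
    simp only [uncurry, K, K', comp_apply] at h₁ h₂ ⊢
    rw [h₁, h₂]
    ring
  calc cutNorm1 ρ (fun x y => W₁ (φ₁ x.1) (φ₁ y.1) - W₃ (ψ₃ x.2) (ψ₃ y.2))
      = cutNorm1 ρ (fun x y => K x.1 y.1 + K' x.2 y.2) := cutNorm1_congr_ae hglue
    _ ≤ cutNorm1 ρ (fun x y => K x.1 y.1) + cutNorm1 ρ (fun x y => K' x.2 y.2) :=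
        cutNorm1_add_le (integrable_uncurry_comp hfst hK) (integrable_uncurry_comp hsnd hK')
    _ ≤ cutNorm1 ν K + cutNorm1 ν' K' :=
        add_le_add (cutNorm1_comp_le hfst hK) (cutNorm1_comp_le hsnd hK')
    _ ≤ (cutNorm1 ν (fun x y => W₁ (φ₁ x) (φ₁ y) - W₂ (φ₂ x) (φ₂ y)) + ε / 2)
          + (cutNorm1 ν' (fun x y => W₂ (ψ₂ x) (ψ₂ y) - W₃ (ψ₃ x) (ψ₃ y)) + ε / 2) := by
        gcongr
        · exact (cutNorm1_sub_comp_le_add hφ₂ (integrable_uncurry_comp hφ₁ hW₁) hW₂ hU).trans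
            (add_le_add_right hW₂U _)
        · rw [cutNorm1_sub_comm, cutNorm1_sub_comm ν' (fun x y => W₂ (ψ₂ x) (ψ₂ y))]
          exact (cutNorm1_sub_comp_le_add hψ₂ (integrable_uncurry_comp hψ₃ hW₃) hW₂ hU).trans
            (add_le_add_right hW₂U _)
    _ = _ := by ring

end Gluing

section CutDist

variable {S₁ S₂ : Type} [MeasurableSpace S₁] [MeasurableSpace S₂] {μ₁ : Measure S₁}
  {μ₂ : Measure S₂} {W₁ : S₁ → S₁ → ℝ} {W₂ : S₂ → S₂ → ℝ}

lemma cutDist_le_cutNorm1 {Ω : Type} [MeasurableSpace Ω] {ν : Measure Ω} [IsProbabilityMeasure ν]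
    {φ₁ : Ω → S₁} {φ₂ : Ω → S₂} (hφ₁ : MeasurePreserving φ₁ ν μ₁)
    (hφ₂ : MeasurePreserving φ₂ ν μ₂) :
    cutDist μ₁ μ₂ W₁ W₂ ≤ cutNorm1 ν (fun x y => W₁ (φ₁ x) (φ₁ y) - W₂ (φ₂ x) (φ₂ y)) :=
  csInf_le ⟨0, by rintro _ ⟨_, _, _, _, _, _, _, _, rfl⟩; exact cutNorm1_nonneg _ _⟩
    ⟨Ω, _, ν, inferInstance, φ₁, φ₂, hφ₁, hφ₂, rfl⟩

variable (μ₁ μ₂ W₁ W₂) in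
lemma exists_coupling_cutNorm1_lt [IsProbabilityMeasure μ₁] [IsProbabilityMeasure μ₂]
    {ε : ℝ} (hε : 0 < ε) :
    ∃ (Ω : Type) (_ : MeasurableSpace Ω) (ν : Measure Ω), IsProbabilityMeasure ν ∧
      ∃ (φ₁ : Ω → S₁) (φ₂ : Ω → S₂), MeasurePreserving φ₁ ν μ₁ ∧ MeasurePreserving φ₂ ν μ₂ ∧
        cutNorm1 ν (fun x y => W₁ (φ₁ x) (φ₁ y) - W₂ (φ₂ x) (φ₂ y)) < cutDist μ₁ μ₂ W₁ W₂ + ε := by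
  obtain ⟨_, ⟨Ω, _, ν, hν, φ₁, φ₂, hφ₁, hφ₂, rfl⟩, h⟩ := exists_lt_of_csInf_lt
    (by exact ⟨_, S₁ × S₂, _, μ₁.prod μ₂, inferInstance, Prod.fst, Prod.snd, measurePreserving_fst,
      measurePreserving_snd, rfl⟩) (lt_add_of_pos_right (cutDist μ₁ μ₂ W₁ W₂) hε)
  exact ⟨Ω, _, ν, hν, φ₁, φ₂, hφ₁, hφ₂, h⟩

end CutDist

/-- The cut metric satisfies the triangle inequality. -/
theorem cutDist_triangle {S₁ S₂ S₃ : Type}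
    [MeasurableSpace S₁] [MeasurableSpace S₂] [MeasurableSpace S₃]
    (μ₁ : Measure S₁) (μ₂ : Measure S₂) (μ₃ : Measure S₃)
    [IsProbabilityMeasure μ₁] [IsProbabilityMeasure μ₂] [IsProbabilityMeasure μ₃]
    (W₁ : S₁ → S₁ → ℝ) (W₂ : S₂ → S₂ → ℝ) (W₃ : S₃ → S₃ → ℝ)
    (hW₁ : Integrable (fun p : S₁ × S₁ => W₁ p.1 p.2) (μ₁.prod μ₁))
    (hW₂ : Integrable (fun p : S₂ × S₂ => W₂ p.1 p.2) (μ₂.prod μ₂))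
    (hW₃ : Integrable (fun p : S₃ × S₃ => W₃ p.1 p.2) (μ₃.prod μ₃)) :
    cutDist μ₁ μ₃ W₁ W₃ ≤ cutDist μ₁ μ₂ W₁ W₂ + cutDist μ₂ μ₃ W₂ W₃ := by
  refine le_of_forall_pos_lt_add fun ε hε => ?_
  obtain ⟨Ω, _, ν, _, φ₁, φ₂, hφ₁, hφ₂, h₁₂⟩ :=
    exists_coupling_cutNorm1_lt μ₁ μ₂ W₁ W₂ (ε := ε / 3) (by positivity)
  obtain ⟨Ω', _, ν', _, ψ₂, ψ₃, hψ₂, hψ₃, h₂₃⟩ :=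
    exists_coupling_cutNorm1_lt μ₂ μ₃ W₂ W₃ (ε := ε / 3) (by positivity)
  obtain ⟨ρ, _, hfst, hsnd, hρ⟩ :=
    exists_glued_coupling_cutNorm1_le hW₁ hW₂ hW₃ hφ₁ hφ₂ hψ₂ hψ₃ (ε := ε / 3) (by positivity)
  calc cutDist μ₁ μ₃ W₁ W₃
      ≤ cutNorm1 ρ (fun x y => W₁ (φ₁ x.1) (φ₁ y.1) - W₃ (ψ₃ x.2) (ψ₃ y.2)) :=
        cutDist_le_cutNorm1 (hφ₁.comp hfst) (hψ₃.comp hsnd)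
    _ < cutDist μ₁ μ₂ W₁ W₂ + cutDist μ₂ μ₃ W₂ W₃ + ε := by linarith
end

section
/- In the definition of the cut metric, it suffices to consider couplings given by the two projections from the product space: δ_□(W₁,W₂) equals the infimum over probability measures μ on S₁×S₂ with marginals μ₁ and μ₂ of the cut norm of W₁^{π₁} − W₂^{π₂} on (S₁×S₂, μ). -/
open MeasureTheory

/-!
A coupling `(φ₁, φ₂)` on `(Ω, ν)` factors through `ψ = (φ₁, φ₂) : Ω → S₁ × S₂`, and the
push-forward `ψ_* ν` has marginals `μ₁, μ₂`. Pulling a kernel back along a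
measure-preserving map can only increase its cut norm, because preimages of measurable
rectangles are measurable rectangles with the same integral. So every coupling is dominated
by a coupling on the product, and conversely the two projections are themselves a coupling.
-/

section CutNorm

variable {S Ω : Type} [MeasurableSpace S] [MeasurableSpace Ω]

lemma abs_setIntegral_prod_le_cutNorm1 {μ : Measure S} {W : S → S → ℝ}
    (hW : Integrable (fun p : S × S => W p.1 p.2) (μ.prod μ)) {A B : Set S}
    (hA : MeasurableSet A) (hB : MeasurableSet B) :
    |∫ p in A ×ˢ B, W p.1 p.2 ∂(μ.prod μ)| ≤ cutNorm1 μ W := by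
  refine le_csSup ⟨∫ p, |W p.1 p.2| ∂(μ.prod μ), ?_⟩ ⟨A, B, hA, hB, rfl⟩
  rintro _ ⟨A', B', -, -, rfl⟩
  exact abs_integral_le_integral_abs.trans
    (setIntegral_le_integral hW.abs (.of_forall fun _ => abs_nonneg _))

lemma cutNorm1_le_cutNorm1_comp {μ : Measure S} {ν : Measure Ω} [SFinite ν] {φ : Ω → S}
    (hφ : MeasurePreserving φ ν μ) {W : S → S → ℝ}
    (hW : Integrable (fun p : S × S => W p.1 p.2) (μ.prod μ)) :
    cutNorm1 μ W ≤ cutNorm1 ν (fun x y => W (φ x) (φ y)) := by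
  have hφφ := hφ.prod hφ
  refine csSup_le ⟨0, ∅, ∅, .empty, .empty, by simp⟩ ?_
  rintro _ ⟨A, B, hA, hB, rfl⟩
  have hpull : ∫ p in A ×ˢ B, W p.1 p.2 ∂(μ.prod μ)
      = ∫ x in (φ ⁻¹' A) ×ˢ (φ ⁻¹' B), W (φ x.1) (φ x.2) ∂(ν.prod ν) := by
    rw [← hφφ.map_eq]
    exact setIntegral_map (hA.prod hB) (hφφ.map_eq ▸ hW.aestronglyMeasurable)
      hφφ.measurable.aemeasurable
  rw [hpull]
  exact abs_setIntegral_prod_le_cutNorm1 (W := fun x y => W (φ x) (φ y))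
    (hφφ.integrable_comp_of_integrable hW)
    (hφ.measurable hA) (hφ.measurable hB)

end CutNorm

theorem cutDist_eq_inf_over_product_couplings_general {S₁ S₂ : Type}
    [MeasurableSpace S₁] [MeasurableSpace S₂]
    (μ₁ : Measure S₁) (μ₂ : Measure S₂)
    (W₁ : S₁ → S₁ → ℝ) (W₂ : S₂ → S₂ → ℝ)
    (hW₁ : Integrable (fun p : S₁ × S₁ => W₁ p.1 p.2) (μ₁.prod μ₁))
    (hW₂ : Integrable (fun p : S₂ × S₂ => W₂ p.1 p.2) (μ₂.prod μ₂)) :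
    cutDist μ₁ μ₂ W₁ W₂ =
      sInf {r : ℝ | ∃ μ : Measure (S₁ × S₂), IsProbabilityMeasure μ ∧
        μ.map Prod.fst = μ₁ ∧ μ.map Prod.snd = μ₂ ∧
        r = cutNorm1 μ (fun p q => W₁ p.1 q.1 - W₂ p.2 q.2)} := by
  refine csInf_eq_csInf_of_forall_exists_le ?_ ?_
  · rintro _ ⟨Ω, _, ν, _, φ₁, φ₂, hφ₁, hφ₂, rfl⟩
    set μ := ν.map fun ω => (φ₁ ω, φ₂ ω)
    have hψ : MeasurePreserving (fun ω => (φ₁ ω, φ₂ ω)) ν μ :=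
      ⟨hφ₁.measurable.prodMk hφ₂.measurable, rfl⟩
    have : IsProbabilityMeasure μ :=
      Measure.isProbabilityMeasure_map hψ.measurable.aemeasurable
    have hfst : MeasurePreserving Prod.fst μ μ₁ :=
      ⟨measurable_fst, (Measure.fst_map_prodMk hφ₂.measurable).trans hφ₁.map_eq⟩
    have hsnd : MeasurePreserving Prod.snd μ μ₂ :=
      ⟨measurable_snd, (Measure.snd_map_prodMk hφ₁.measurable).trans hφ₂.map_eq⟩
    have hW : Integrable
        (fun p : (S₁ × S₂) × (S₁ × S₂) => W₁ p.1.1 p.2.1 - W₂ p.1.2 p.2.2) (μ.prod μ) :=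
      ((hfst.prod hfst).integrable_comp_of_integrable hW₁).sub
        ((hsnd.prod hsnd).integrable_comp_of_integrable hW₂)
    exact ⟨_, ⟨μ, inferInstance, hfst.map_eq, hsnd.map_eq, rfl⟩,
      cutNorm1_le_cutNorm1_comp hψ hW⟩
  · rintro _ ⟨μ, hμ, hfst, hsnd, rfl⟩
    exact ⟨_, ⟨S₁ × S₂, _, μ, hμ, Prod.fst, Prod.snd, ⟨measurable_fst, hfst⟩,
      ⟨measurable_snd, hsnd⟩, rfl⟩, le_rfl⟩

/-- In the definition of the cut metric it suffices to consider couplings given by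
the two coordinate projections from the product space equipped with a probability
measure having the prescribed marginals. -/
theorem cutDist_eq_inf_over_product_couplings {S₁ S₂ : Type}
    [MeasurableSpace S₁] [MeasurableSpace S₂]
    (μ₁ : Measure S₁) (μ₂ : Measure S₂)
    [IsProbabilityMeasure μ₁] [IsProbabilityMeasure μ₂]
    (W₁ : S₁ → S₁ → ℝ) (W₂ : S₂ → S₂ → ℝ)
    (hW₁ : Integrable (fun p : S₁ × S₁ => W₁ p.1 p.2) (μ₁.prod μ₁))
    (hW₂ : Integrable (fun p : S₂ × S₂ => W₂ p.1 p.2) (μ₂.prod μ₂)) :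
    cutDist μ₁ μ₂ W₁ W₂ =
      sInf {r : ℝ | ∃ μ : Measure (S₁ × S₂), IsProbabilityMeasure μ ∧
        μ.map Prod.fst = μ₁ ∧ μ.map Prod.snd = μ₂ ∧
        r = cutNorm1 μ (fun p q => W₁ p.1 q.1 - W₂ p.2 q.2)} :=
  cutDist_eq_inf_over_product_couplings_general μ₁ μ₂ W₁ W₂ hW₁ hW₂
end

section
/- For a kernel W with |W| ≤ 1 on a probability space S, the operator norm of the integral operator T_W from L^∞ to L¹ equals the cut norm ‖W‖_{□,2}, and for any p,q ∈ [1,∞], ‖T_W‖_{L^p → L^q} ≥ ‖T_W‖_{L^∞ → L¹}. -/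
open MeasureTheory

/-- The cut norm defined with [-1,1]-valued measurable functions. -/
noncomputable def cutNorm2 {S : Type*} [MeasurableSpace S] (μ : Measure S)
    (W : S → S → ℝ) : ℝ :=
  sSup {r : ℝ | ∃ f g : S → ℝ, Measurable f ∧ Measurable g ∧
    (∀ x, f x ∈ Set.Icc (-1 : ℝ) 1) ∧ (∀ x, g x ∈ Set.Icc (-1 : ℝ) 1) ∧
    r = |∫ p, W p.1 p.2 * f p.1 * g p.2 ∂(μ.prod μ)|}

/-- The operator norm of the integral operator `T_W f (x) = ∫ W(x,y) f(y) dμ(y)`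
as an operator from `L^p` to `L^q`. -/
noncomputable def opNormW {S : Type*} [MeasurableSpace S] (μ : Measure S)
    (W : S → S → ℝ) (p q : ENNReal) : ℝ :=
  sSup {r : ℝ | ∃ f : S → ℝ, Measurable f ∧ eLpNorm f p μ ≤ 1 ∧
    r = (eLpNorm (fun x => ∫ y, W x y * f y ∂μ) q μ).toReal}

/-!
Since `|W| ≤ 1`, `|T_W f x| ≤ ‖f‖₁` pointwise, so on a probability space `T_W` maps the unit
ball of every `L^p` (`p ≥ 1`) into the unit ball of every `L^q`; monotonicity of `L^p` norms
in `p` then compares the operator norms. For the equality, Fubini rewrites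
`∫∫ W(x,y) f(x) g(y)` as `∫ f · T_W g`, and `L¹`–`L^∞` duality, attained at
`f = sign (T_W g)`, turns the supremum over `f` into `‖T_W g‖₁`. An essentially bounded `f`
may be truncated to `[-1, 1]` without changing `T_W f`.
-/

section

variable {S : Type*} [MeasurableSpace S] {μ : Measure S} {W : S → S → ℝ}

lemma abs_mul_mul_le_one {a b c : ℝ} (ha : |a| ≤ 1) (hb : |b| ≤ 1) (hc : |c| ≤ 1) :
    |a * b * c| ≤ 1 := by
  rw [abs_mul, abs_mul]
  exact mul_le_one₀ (mul_le_one₀ ha (abs_nonneg b) hb) (abs_nonneg c) hc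

lemma enorm_mul_le_of_abs_le_one {a : ℝ} (b : ℝ) (ha : |a| ≤ 1) : ‖a * b‖ₑ ≤ ‖b‖ₑ := by
  rw [enorm_mul]
  exact mul_le_of_le_one_left' (by rwa [Real.enorm_eq_ofReal_abs, ENNReal.ofReal_le_one])

lemma abs_integral_mul_le_toReal_eLpNorm_one {f g : S → ℝ} (hf : ∀ x, |f x| ≤ 1)
    (hg : eLpNorm g 1 μ ≠ ⊤) : |∫ x, f x * g x ∂μ| ≤ (eLpNorm g 1 μ).toReal := by
  rw [← ENNReal.ofReal_le_iff_le_toReal hg, ← Real.enorm_eq_ofReal_abs,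
    eLpNorm_one_eq_lintegral_enorm]
  exact (enorm_integral_le_lintegral_enorm _).trans
    (lintegral_mono fun x => enorm_mul_le_of_abs_le_one _ (hf x))

lemma exists_integral_mul_eq_toReal_eLpNorm_one {g : S → ℝ} (hg : Measurable g) :
    ∃ f : S → ℝ, Measurable f ∧ (∀ x, f x ∈ Set.Icc (-1 : ℝ) 1) ∧
      ∫ x, f x * g x ∂μ = (eLpNorm g 1 μ).toReal := by
  refine ⟨fun x => if 0 ≤ g x then 1 else -1,
    Measurable.ite (measurableSet_le measurable_const hg) measurable_const measurable_const,
    fun x => by dsimp only; split_ifs <;> norm_num, ?_⟩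
  have hsign : ∀ x, (if 0 ≤ g x then 1 else -1) * g x = ‖g x‖ := fun x => by
    rw [Real.norm_eq_abs]
    split_ifs with h
    · rw [one_mul, abs_of_nonneg h]
    · rw [neg_one_mul, abs_of_neg (not_le.mp h)]
  simp_rw [hsign]
  rw [integral_norm_eq_lintegral_enorm hg.aestronglyMeasurable, eLpNorm_one_eq_lintegral_enorm]

lemma exists_measurable_Icc_ae_eq_of_eLpNorm_top_le_one {f : S → ℝ} (hf : Measurable f)
    (hf1 : eLpNorm f ⊤ μ ≤ 1) :
    ∃ f' : S → ℝ, Measurable f' ∧ (∀ x, f' x ∈ Set.Icc (-1 : ℝ) 1) ∧ f =ᵐ[μ] f' := by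
  refine ⟨fun x => max (-1) (min 1 (f x)), measurable_const.max (measurable_const.min hf),
    fun x => ⟨le_max_left _ _, max_le (by norm_num) (min_le_left _ _)⟩, ?_⟩
  filter_upwards [ae_le_eLpNormEssSup (f := f) (μ := μ)] with x hx
  rw [← eLpNorm_exponent_top] at hx
  have h1 : |f x| ≤ 1 := by
    rw [← ENNReal.ofReal_le_one, ← Real.enorm_eq_ofReal_abs]
    exact hx.trans hf1
  rw [min_eq_right (abs_le.mp h1).2, max_eq_right (abs_le.mp h1).1]

-- `opNormW` is phrased with `integralOp μ W f` unfolded.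
noncomputable def integralOp (μ : Measure S) (W : S → S → ℝ) (f : S → ℝ) (x : S) : ℝ :=
  ∫ y, W x y * f y ∂μ

lemma integralOp_congr_ae {f g : S → ℝ} (h : f =ᵐ[μ] g) : integralOp μ W f = integralOp μ W g :=
  funext fun x => integral_congr_ae (h.mono fun y hy => congrArg (W x y * ·) hy)

lemma measurable_integralOp [SFinite μ] (hW : Measurable (Function.uncurry W)) {f : S → ℝ}
    (hf : Measurable f) : Measurable (integralOp μ W f) :=
  (hW.mul (hf.comp measurable_snd)).stronglyMeasurable.integral_prod_right'.measurable

lemma enorm_integralOp_le (hW : ∀ x y, |W x y| ≤ 1) (f : S → ℝ) (x : S) :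
    ‖integralOp μ W f x‖ₑ ≤ eLpNorm f 1 μ := by
  rw [eLpNorm_one_eq_lintegral_enorm]
  exact (enorm_integral_le_lintegral_enorm _).trans
    (lintegral_mono fun y => enorm_mul_le_of_abs_le_one _ (hW x y))

lemma eLpNorm_integralOp_le [IsProbabilityMeasure μ] (hW : ∀ x y, |W x y| ≤ 1)
    {p : ENNReal} (hp : 1 ≤ p) {f : S → ℝ} (hf : AEStronglyMeasurable f μ) (q : ENNReal) :
    eLpNorm (integralOp μ W f) q μ ≤ eLpNorm f p μ := by
  calc eLpNorm (integralOp μ W f) q μ ≤ eLpNorm f 1 μ • μ Set.univ ^ q.toReal⁻¹ :=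
        eLpNorm_le_of_ae_enorm_bound (ae_of_all _ (enorm_integralOp_le hW f))
    _ = eLpNorm f 1 μ := by simp
    _ ≤ eLpNorm f p μ := eLpNorm_le_eLpNorm_of_exponent_le hp hf

lemma integral_prod_mul_mul_eq_integral_mul_integralOp [IsFiniteMeasure μ]
    (hWm : Measurable (Function.uncurry W)) (hW : ∀ x y, |W x y| ≤ 1) {f g : S → ℝ}
    (hf : Measurable f) (hg : Measurable g) (hf1 : ∀ x, |f x| ≤ 1) (hg1 : ∀ x, |g x| ≤ 1) :
    ∫ p, W p.1 p.2 * f p.1 * g p.2 ∂(μ.prod μ) = ∫ x, f x * integralOp μ W g x ∂μ := by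
  have hint : Integrable (fun p : S × S => W p.1 p.2 * f p.1 * g p.2) (μ.prod μ) := by
    refine .of_bound ((hWm.mul (hf.comp measurable_fst)).mul
      (hg.comp measurable_snd)).aestronglyMeasurable 1 (ae_of_all _ fun p => ?_)
    exact abs_mul_mul_le_one (hW p.1 p.2) (hf1 p.1) (hg1 p.2)
  rw [integral_prod _ hint]
  refine integral_congr_ae (ae_of_all _ fun x => ?_)
  simp only [integralOp, ← integral_const_mul]
  congr 1 with y
  ring

lemma opNormW_nonneg (p q : ENNReal) : 0 ≤ opNormW μ W p q :=
  Real.sSup_nonneg <| by rintro _ ⟨f, -, -, rfl⟩; exact ENNReal.toReal_nonneg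

lemma le_opNormW [IsProbabilityMeasure μ] (hW : ∀ x y, |W x y| ≤ 1) {p : ENNReal} (hp : 1 ≤ p)
    {f : S → ℝ} (hf : Measurable f) (hfp : eLpNorm f p μ ≤ 1) (q : ENNReal) :
    (eLpNorm (integralOp μ W f) q μ).toReal ≤ opNormW μ W p q := by
  refine le_csSup ⟨1, ?_⟩ ⟨f, hf, hfp, rfl⟩
  rintro _ ⟨g, hg, hgp, rfl⟩
  refine ENNReal.toReal_le_of_le_ofReal zero_le_one ?_
  rw [ENNReal.ofReal_one]
  exact (eLpNorm_integralOp_le hW hp hg.aestronglyMeasurable q).trans hgp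

lemma opNormW_le_opNormW [IsProbabilityMeasure μ] (hWm : Measurable (Function.uncurry W))
    (hW : ∀ x y, |W x y| ≤ 1) {p p' q q' : ENNReal} (hp : 1 ≤ p) (hpp' : p ≤ p')
    (hqq' : q' ≤ q) : opNormW μ W p' q' ≤ opNormW μ W p q := by
  refine Real.sSup_le ?_ (opNormW_nonneg p q)
  rintro _ ⟨f, hf, hfp', rfl⟩
  have hfp : eLpNorm f p μ ≤ 1 :=
    (eLpNorm_le_eLpNorm_of_exponent_le hpp' hf.aestronglyMeasurable).trans hfp'
  have hfin : eLpNorm (integralOp μ W f) q μ ≠ ⊤ :=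
    ((eLpNorm_integralOp_le hW hp hf.aestronglyMeasurable q).trans hfp).trans_lt
      ENNReal.one_lt_top |>.ne
  refine (ENNReal.toReal_mono hfin ?_).trans (le_opNormW hW hp hf hfp q)
  exact eLpNorm_le_eLpNorm_of_exponent_le hqq' (measurable_integralOp hWm hf).aestronglyMeasurable

lemma cutNorm2_nonneg : 0 ≤ cutNorm2 μ W :=
  Real.sSup_nonneg <| by rintro _ ⟨f, g, -, -, -, -, rfl⟩; exact abs_nonneg _

lemma le_cutNorm2 [IsFiniteMeasure μ] (hW : ∀ x y, |W x y| ≤ 1) {f g : S → ℝ}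
    (hf : Measurable f) (hg : Measurable g) (hfI : ∀ x, f x ∈ Set.Icc (-1 : ℝ) 1)
    (hgI : ∀ x, g x ∈ Set.Icc (-1 : ℝ) 1) :
    |∫ p, W p.1 p.2 * f p.1 * g p.2 ∂(μ.prod μ)| ≤ cutNorm2 μ W := by
  refine le_csSup ⟨(μ.prod μ).real Set.univ, ?_⟩ ⟨f, g, hf, hg, hfI, hgI, rfl⟩
  rintro _ ⟨f, g, -, -, hfI, hgI, rfl⟩
  simpa using norm_integral_le_of_norm_le_const (μ := μ.prod μ)
    (f := fun p => W p.1 p.2 * f p.1 * g p.2) <| ae_of_all _ fun p =>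
    abs_mul_mul_le_one (hW p.1 p.2) (abs_le.mpr (hfI p.1)) (abs_le.mpr (hgI p.2))

lemma opNormW_top_one_le_cutNorm2 [IsProbabilityMeasure μ]
    (hWm : Measurable (Function.uncurry W)) (hW : ∀ x y, |W x y| ≤ 1) :
    opNormW μ W ⊤ 1 ≤ cutNorm2 μ W := by
  refine Real.sSup_le ?_ cutNorm2_nonneg
  rintro _ ⟨f, hf, hf1, rfl⟩
  obtain ⟨f', hf', hf'I, hff'⟩ := exists_measurable_Icc_ae_eq_of_eLpNorm_top_le_one hf hf1
  obtain ⟨s, hs, hsI, hs_int⟩ :=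
    exists_integral_mul_eq_toReal_eLpNorm_one (measurable_integralOp (μ := μ) hWm hf')
  calc (eLpNorm (integralOp μ W f) 1 μ).toReal
      = ∫ p, W p.1 p.2 * s p.1 * f' p.2 ∂(μ.prod μ) := by
        rw [integralOp_congr_ae hff', ← hs_int, integral_prod_mul_mul_eq_integral_mul_integralOp
          hWm hW hs hf' (fun x => abs_le.mpr (hsI x)) (fun x => abs_le.mpr (hf'I x))]
    _ ≤ cutNorm2 μ W := (le_abs_self _).trans (le_cutNorm2 hW hs hf' hsI hf'I)

lemma cutNorm2_le_opNormW_top_one [IsProbabilityMeasure μ]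
    (hWm : Measurable (Function.uncurry W)) (hW : ∀ x y, |W x y| ≤ 1) :
    cutNorm2 μ W ≤ opNormW μ W ⊤ 1 := by
  refine Real.sSup_le ?_ (opNormW_nonneg ⊤ 1)
  rintro _ ⟨f, g, hf, hg, hfI, hgI, rfl⟩
  have hg1 : ∀ x, |g x| ≤ 1 := fun x => abs_le.mpr (hgI x)
  have hg_top : eLpNorm g ⊤ μ ≤ 1 := by
    simpa using eLpNorm_le_of_ae_bound (p := ⊤) (μ := μ)
      (ae_of_all _ fun x => (Real.norm_eq_abs _).trans_le (hg1 x))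
  have hfin : eLpNorm (integralOp μ W g) 1 μ ≠ ⊤ :=
    ((eLpNorm_integralOp_le hW le_top hg.aestronglyMeasurable 1).trans hg_top).trans_lt
      ENNReal.one_lt_top |>.ne
  rw [integral_prod_mul_mul_eq_integral_mul_integralOp hWm hW hf hg
    (fun x => abs_le.mpr (hfI x)) hg1]
  exact (abs_integral_mul_le_toReal_eLpNorm_one (fun x => abs_le.mpr (hfI x)) hfin).trans
    (le_opNormW hW le_top hg hg_top 1)

end

theorem opNorm_infty_one_eq_cutNorm2_general {S : Type*} [MeasurableSpace S]
    (μ : Measure S) [IsProbabilityMeasure μ]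
    (W : S → S → ℝ)
    (hWm : Measurable (fun p : S × S => W p.1 p.2))
    (hbdd : ∀ x y, |W x y| ≤ 1) :
    opNormW μ W ⊤ 1 = cutNorm2 μ W ∧
    ∀ p q : ENNReal, 1 ≤ p → 1 ≤ q → opNormW μ W ⊤ 1 ≤ opNormW μ W p q :=
  ⟨(opNormW_top_one_le_cutNorm2 hWm hbdd).antisymm (cutNorm2_le_opNormW_top_one hWm hbdd),
    fun _ _ hp hq => opNormW_le_opNormW hWm hbdd hp le_top hq⟩

/-- For a kernel `W` with `|W| ≤ 1`, the operator norm of `T_W : L^∞ → L¹` equals the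
cut norm `‖W‖_{□,2}`, and for all `p, q` the `L^p → L^q` operator norm is at least the
`L^∞ → L¹` operator norm. -/
theorem opNorm_infty_one_eq_cutNorm2 {S : Type*} [MeasurableSpace S]
    (μ : Measure S) [IsProbabilityMeasure μ]
    (W : S → S → ℝ)
    (hWm : Measurable (fun p : S × S => W p.1 p.2))
    (hsymm : ∀ x y, W x y = W y x)
    (hnonneg : ∀ x y, 0 ≤ W x y)
    (hbdd : ∀ x y, |W x y| ≤ 1) :
    opNormW μ W ⊤ 1 = cutNorm2 μ W ∧
    ∀ p q : ENNReal, 1 ≤ p → 1 ≤ q → opNormW μ W ⊤ 1 ≤ opNormW μ W p q :=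
  opNorm_infty_one_eq_cutNorm2_general μ W hWm hbdd
end

section
/- If A is a closed separable subspace of L¹(S,F,μ) for a probability space (S,F,μ), then there exists a jointly measurable function Φ : A × S → ℝ such that for every f ∈ A, Φ(f,x) = f(x) for μ-almost every x ∈ S. -/
/-!
Fix a dense sequence `uₙ` in `A` and measurable representatives of the `uₙ`. For each `k` the
first index `n_k(f)` with `‖f - u_{n_k(f)}‖₁ < 2⁻ᵏ` depends measurably on `f`, and since it takes
only countably many values, `(f, x) ↦ u_{n_k(f)}(x)` is jointly measurable. The `L¹` errors are
summable, so for each `f` these approximants converge to `f` almost everywhere, and `Φ` is their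
pointwise limit wherever it exists.
-/

open MeasureTheory Filter Topology

theorem DenseRange.exists_measurable_dist_lt {X : Type*} [PseudoMetricSpace X]
    [MeasurableSpace X] [OpensMeasurableSpace X] {u : ℕ → X} (hu : DenseRange u) {ε : ℝ}
    (hε : 0 < ε) : ∃ i : X → ℕ, Measurable i ∧ ∀ x, dist x (u (i x)) < ε := by
  classical
  exact ⟨fun x => Nat.find (hu.exists_dist_lt x hε),
    measurable_find _ fun n => (measurableSet_ball : MeasurableSet (Metric.ball (u n) ε)),
    fun x => Nat.find_spec (hu.exists_dist_lt x hε)⟩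

theorem MeasureTheory.Lp.ae_tendsto_of_summable_dist {α E : Type*} [MeasurableSpace α]
    {μ : Measure α} [NormedAddCommGroup E] {f : Lp E 1 μ} {g : ℕ → Lp E 1 μ}
    (h : Summable fun k => dist f (g k)) :
    ∀ᵐ x ∂μ, Tendsto (fun k => g k x) atTop (𝓝 (f x)) := by
  have hmeas : ∀ k, AEMeasurable (fun x => ‖f x - g k x‖ₑ) μ := fun k =>
    ((Lp.aestronglyMeasurable f).sub (Lp.aestronglyMeasurable (g k))).enorm
  have hint : ∀ k, ∫⁻ x, ‖f x - g k x‖ₑ ∂μ = edist f (g k) := fun k => by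
    rw [Lp.edist_def, eLpNorm_one_eq_lintegral_enorm]
    rfl
  have hfin : ∫⁻ x, ∑' k, ‖f x - g k x‖ₑ ∂μ ≠ ⊤ := by
    rw [lintegral_tsum hmeas]
    simp only [hint, edist_dist]
    rw [← ENNReal.ofReal_tsum_of_nonneg (fun _ => dist_nonneg) h]
    exact ENNReal.ofReal_ne_top
  filter_upwards [ae_lt_top' (AEMeasurable.tsum hmeas) hfin] with x hx
  refine tendsto_iff_edist_tendsto_0.2 ?_
  simp_rw [edist_comm _ (f x), edist_eq_enorm_sub]
  exact ENNReal.tendsto_atTop_zero_of_tsum_ne_top hx.ne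

theorem exists_measurable_evaluation_general {S : Type*} [MeasurableSpace S]
    (μ : Measure S)
    [MeasurableSpace (Lp ℝ 1 μ)] [BorelSpace (Lp ℝ 1 μ)]
    (A : Submodule ℝ (Lp ℝ 1 μ))
    (hsep : TopologicalSpace.IsSeparable (A : Set (Lp ℝ 1 μ))) :
    ∃ Φ : A × S → ℝ, Measurable Φ ∧
      ∀ f : A, ∀ᵐ x ∂μ, Φ (f, x) = ((f : Lp ℝ 1 μ) : S → ℝ) x := by
  have := hsep.separableSpace
  let u := TopologicalSpace.denseSeq A
  have hu : DenseRange u := TopologicalSpace.denseRange_denseSeq A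
  choose index hindex_meas hindex_dist using fun k : ℕ =>
    hu.exists_measurable_dist_lt (pow_pos one_half_pos k)
  choose rep hrep_meas hrep_ae using fun n => Lp.aestronglyMeasurable (u n : Lp ℝ 1 μ)
  let G : ℕ → A × S → ℝ := fun k p => rep (index k p.1) p.2
  have hG : ∀ k, Measurable (G k) := fun k =>
    (measurable_from_prod_countable_right (f := fun q : ℕ × S => rep q.1 q.2)
        fun n => (hrep_meas n).measurable).comp
      (((hindex_meas k).comp measurable_fst).prodMk measurable_snd)
  refine ⟨fun p => limUnder atTop (G · p),
    (StronglyMeasurable.limUnder fun k => (hG k).stronglyMeasurable).measurable, fun f => ?_⟩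
  have hsum : Summable fun k => dist (f : Lp ℝ 1 μ) (u (index k f)) :=
    summable_geometric_two.of_nonneg_of_le (fun _ => dist_nonneg) fun k => (hindex_dist k f).le
  have hrep : ∀ᵐ x ∂μ, ∀ k, (u (index k f) : Lp ℝ 1 μ) x = G k (f, x) :=
    ae_all_iff.2 fun k => hrep_ae _
  filter_upwards [Lp.ae_tendsto_of_summable_dist hsum, hrep] with x hconv hGx
  exact (hconv.congr hGx).limUnder_eq

/-- If `A` is a closed separable subspace of `L¹(S,μ)` for a probability space `(S,μ)`,
then there is a jointly measurable `Φ : A × S → ℝ` such that for every `f ∈ A`,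
`Φ(f, x) = f(x)` for almost every `x`. -/
theorem exists_measurable_evaluation {S : Type*} [MeasurableSpace S]
    (μ : Measure S) [IsProbabilityMeasure μ]
    [MeasurableSpace (Lp ℝ 1 μ)] [BorelSpace (Lp ℝ 1 μ)]
    (A : Submodule ℝ (Lp ℝ 1 μ))
    (hclosed : IsClosed (A : Set (Lp ℝ 1 μ)))
    (hsep : TopologicalSpace.IsSeparable (A : Set (Lp ℝ 1 μ))) :
    ∃ Φ : A × S → ℝ, Measurable Φ ∧
      ∀ f : A, ∀ᵐ x ∂μ, Φ (f, x) = ((f : Lp ℝ 1 μ) : S → ℝ) x :=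
  exists_measurable_evaluation_general μ A hsep
end
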